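/- arXiv:2006.16887 — 2 statements merged into one kernel-verified Lean document; each statement's English description precedes it below -/
import Mathlib

section
/- For any two graphs G₁, G₂, the complete thinness of their disjoint union satisfies compthin(G₁ ∪ G₂) = compthin(G₁) + compthin(G₂), and likewise for the complete proper thinness. -/
open SimpleGraph

/-- An ordering (given by an injective rank function `f`) and a partition (given by a
coloring `c`) are consistent: for `r < s < t`, if `r, s` are in the same class and
`t` is adjacent to `r`, then `t` is adjacent to `s`. -/
def Consistent {V : Type*} (G : SimpleGraph V) (f : V → ℕ) (c : V → ℕ) : Prop :=
  ∀ r s t : V, f r < f s → f s < f t → c r = c s → G.Adj t r → G.Adj t s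

/-- Strong consistency: consistency with the ordering and with its reverse. -/
def StronglyConsistent {V : Type*} (G : SimpleGraph V) (f : V → ℕ) (c : V → ℕ) : Prop :=
  Consistent G f c ∧
    ∀ r s t : V, f r < f s → f s < f t → c s = c t → G.Adj t r → G.Adj s r

/-- The thinness of a graph. -/
noncomputable def thin {V : Type*} (G : SimpleGraph V) : ℕ :=
  sInf {k | ∃ f c : V → ℕ, Function.Injective f ∧ (∀ v, c v < k) ∧ Consistent G f c}

/-- The proper thinness of a graph. -/
noncomputable def pthin {V : Type*} (G : SimpleGraph V) : ℕ :=
  sInf {k | ∃ f c : V → ℕ, Function.Injective f ∧ (∀ v, c v < k) ∧ StronglyConsistent G f c}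

/-- Independent thinness: classes must be independent sets. -/
noncomputable def indthin {V : Type*} (G : SimpleGraph V) : ℕ :=
  sInf {k | ∃ f c : V → ℕ, Function.Injective f ∧ (∀ v, c v < k) ∧ Consistent G f c ∧
    ∀ u v : V, c u = c v → ¬ G.Adj u v}

/-- Independent proper thinness. -/
noncomputable def indpthin {V : Type*} (G : SimpleGraph V) : ℕ :=
  sInf {k | ∃ f c : V → ℕ, Function.Injective f ∧ (∀ v, c v < k) ∧ StronglyConsistent G f c ∧
    ∀ u v : V, c u = c v → ¬ G.Adj u v}

/-- Complete thinness: classes must be cliques. -/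
noncomputable def compthin {V : Type*} (G : SimpleGraph V) : ℕ :=
  sInf {k | ∃ f c : V → ℕ, Function.Injective f ∧ (∀ v, c v < k) ∧ Consistent G f c ∧
    ∀ u v : V, u ≠ v → c u = c v → G.Adj u v}

/-- Complete proper thinness. -/
noncomputable def comppthin {V : Type*} (G : SimpleGraph V) : ℕ :=
  sInf {k | ∃ f c : V → ℕ, Function.Injective f ∧ (∀ v, c v < k) ∧ StronglyConsistent G f c ∧
    ∀ u v : V, u ≠ v → c u = c v → G.Adj u v}

/-- The incompatibility graph `G_<` of a graph and an ordering: for `v < w`,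
`vw` is an edge iff there is `z > w` adjacent to `v` but not to `w`. -/
def incompat {V : Type*} (G : SimpleGraph V) (f : V → ℕ) : SimpleGraph V where
  Adj v w :=
    (f v < f w ∧ ∃ z, f w < f z ∧ G.Adj z v ∧ ¬ G.Adj z w) ∨
    (f w < f v ∧ ∃ z, f v < f z ∧ G.Adj z w ∧ ¬ G.Adj z v)
  symm := ⟨fun v w h => h.symm⟩
  loopless := ⟨fun v h => by rcases h with ⟨h, _⟩ | ⟨h, _⟩ <;> exact lt_irrefl _ h⟩

/-- The join of two graphs. -/
def joinG {V₁ V₂ : Type*} (G₁ : SimpleGraph V₁) (G₂ : SimpleGraph V₂) :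
    SimpleGraph (V₁ ⊕ V₂) where
  Adj x y := match x, y with
    | Sum.inl u, Sum.inl v => G₁.Adj u v
    | Sum.inr u, Sum.inr v => G₂.Adj u v
    | Sum.inl _, Sum.inr _ => True
    | Sum.inr _, Sum.inl _ => True
  symm := by refine ⟨?_⟩; rintro (u | u) (v | v) h
             · exact G₁.adj_symm h
             · trivial
             · trivial
             · exact G₂.adj_symm h
  loopless := by refine ⟨?_⟩; rintro (u | u) h
                 · exact G₁.loopless.irrefl u h
                 · exact G₂.loopless.irrefl u h

/-- A graph is complete iff all pairs of distinct vertices are adjacent. -/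
def IsCompleteGraph {V : Type*} (G : SimpleGraph V) : Prop :=
  ∀ u v : V, u ≠ v → G.Adj u v

/-- The clique number of a graph. -/
noncomputable def omegaNum {V : Type*} (G : SimpleGraph V) : ℕ :=
  sSup {n | ∃ s : Finset V, s.card = n ∧ ∀ u ∈ s, ∀ v ∈ s, u ≠ v → G.Adj u v}

/-- The independence number of a graph. -/
noncomputable def alphaNum {V : Type*} (G : SimpleGraph V) : ℕ :=
  sSup {n | ∃ s : Finset V, s.card = n ∧ ∀ u ∈ s, ∀ v ∈ s, u ≠ v → ¬ G.Adj u v}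


/-!
In a complete thinning of `G₁ ⊕g G₂` every class is a clique, hence lies inside one of the two
summands; so the classes split into those of a complete thinning of `G₁` and those of one of
`G₂`, and restricting the ordering to each summand keeps consistency. Conversely, thinnings of
the two summands with disjoint sets of classes combine, under any interleaving of the two
orderings, into a thinning of the union: a consistency triple whose first two vertices share a
class and whose third is adjacent to the first lies entirely in one summand.
-/

section CompleteThinning

variable {V W V₁ V₂ : Type*}

def ConsistentWith (G : SimpleGraph V) (lt : V → V → Prop) (c : V → ℕ) : Prop :=
  ∀ r s t, lt r s → lt s t → c r = c s → G.Adj t r → G.Adj t s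

namespace ConsistentWith

variable {G : SimpleGraph V} {lt lt' : V → V → Prop} {c c' : V → ℕ}

lemma mono (h : ConsistentWith G lt c) (hlt : ∀ a b, lt' a b → lt a b)
    (hc : ∀ a b, c' a = c' b → c a = c b) : ConsistentWith G lt' c' :=
  fun r s t hrs hst hcrs hadj => h r s t (hlt r s hrs) (hlt s t hst) (hc r s hcrs) hadj

lemma comap {H : SimpleGraph W} (φ : H ↪g G) (h : ConsistentWith G lt c) :
    ConsistentWith H (fun a b => lt (φ a) (φ b)) (c ∘ φ) :=
  fun _ _ _ hrs hst hcrs hadj => φ.map_adj_iff.1 (h _ _ _ hrs hst hcrs (φ.map_adj_iff.2 hadj))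

lemma sum {G₁ : SimpleGraph V₁} {G₂ : SimpleGraph V₂} {lt : V₁ ⊕ V₂ → V₁ ⊕ V₂ → Prop}
    {c₁ : V₁ → ℕ} {c₂ : V₂ → ℕ} (h₁ : ConsistentWith G₁ (fun a b => lt (.inl a) (.inl b)) c₁)
    (h₂ : ConsistentWith G₂ (fun a b => lt (.inr a) (.inr b)) c₂) (hc : ∀ a b, c₁ a ≠ c₂ b) :
    ConsistentWith (G₁ ⊕g G₂) lt (Sum.elim c₁ c₂) := by
  rintro (r | r) (s | s) (t | t) hrs hst hcrs hadj <;>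
    simp only [Sum.elim_inl, Sum.elim_inr, sum_adj] at hcrs hadj ⊢
  · exact h₁ r s t hrs hst hcrs hadj
  · exact absurd hcrs (hc r s)
  · exact absurd hcrs.symm (hc s r)
  · exact h₂ r s t hrs hst hcrs hadj

end ConsistentWith

lemma stronglyConsistent_iff {G : SimpleGraph V} {f c : V → ℕ} :
    StronglyConsistent G f c ↔
      ConsistentWith G (f · < f ·) c ∧ ConsistentWith G (f · > f ·) c := by
  refine and_congr Iff.rfl ⟨fun h r s t hrs hst hc hadj => ?_, fun h r s t hrs hst hc hadj => ?_⟩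
  · exact (h t s r hst hrs hc.symm hadj.symm).symm
  · exact (h t s r hst hrs hc.symm hadj.symm).symm

structure IsCompleteThinning (proper : Bool) (G : SimpleGraph V) (f c : V → ℕ) : Prop where
  injective : Function.Injective f
  consistent : ConsistentWith G (f · < f ·) c
  consistent_reverse : proper → ConsistentWith G (f · > f ·) c
  adj_of_color_eq : ∀ u v, u ≠ v → c u = c v → G.Adj u v

namespace IsCompleteThinning

variable {p : Bool} {G : SimpleGraph V} {f c : V → ℕ}

lemma false_iff : IsCompleteThinning false G f c ↔
    Function.Injective f ∧ Consistent G f c ∧ ∀ u v, u ≠ v → c u = c v → G.Adj u v :=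
  ⟨fun h => ⟨h.injective, h.consistent, h.adj_of_color_eq⟩,
    fun ⟨hf, hc, hadj⟩ => ⟨hf, hc, nofun, hadj⟩⟩

lemma true_iff : IsCompleteThinning true G f c ↔
    Function.Injective f ∧ StronglyConsistent G f c ∧ ∀ u v, u ≠ v → c u = c v → G.Adj u v :=
  ⟨fun h => ⟨h.injective, stronglyConsistent_iff.2 ⟨h.consistent, h.consistent_reverse rfl⟩,
      h.adj_of_color_eq⟩,
    fun ⟨hf, hc, hadj⟩ => ⟨hf, (stronglyConsistent_iff.1 hc).1,
      fun _ => (stronglyConsistent_iff.1 hc).2, hadj⟩⟩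

lemma mono {f' c' : V → ℕ} (h : IsCompleteThinning p G f c)
    (hf : ∀ a b, f' a < f' b ↔ f a < f b) (hc : ∀ a b, c' a = c' b → c a = c b) :
    IsCompleteThinning p G f' c' where
  injective a b hab := h.injective <|
    le_antisymm (not_lt.1 fun hlt => ((hf b a).2 hlt).ne' hab)
      (not_lt.1 fun hlt => ((hf a b).2 hlt).ne hab)
  consistent := h.consistent.mono (fun a b => (hf a b).1) hc
  consistent_reverse hp := (h.consistent_reverse hp).mono (fun a b => (hf b a).1) hc
  adj_of_color_eq u v huv hcuv := h.adj_of_color_eq u v huv (hc u v hcuv)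

lemma comap {H : SimpleGraph W} (φ : H ↪g G) (h : IsCompleteThinning p G f c) :
    IsCompleteThinning p H (f ∘ φ) (c ∘ φ) where
  injective := h.injective.comp φ.injective
  consistent := h.consistent.comap φ
  consistent_reverse hp := (h.consistent_reverse hp).comap φ
  adj_of_color_eq _ _ huv hcuv :=
    φ.map_adj_iff.1 (h.adj_of_color_eq _ _ (φ.injective.ne huv) hcuv)

lemma sum {G₁ : SimpleGraph V₁} {G₂ : SimpleGraph V₂} {f₁ c₁ : V₁ → ℕ} {f₂ c₂ : V₂ → ℕ}
    (h₁ : IsCompleteThinning p G₁ f₁ c₁) (h₂ : IsCompleteThinning p G₂ f₂ c₂)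
    (hc : ∀ a b, c₁ a ≠ c₂ b) :
    IsCompleteThinning p (G₁ ⊕g G₂) (Sum.elim (2 * f₁ ·) (2 * f₂ · + 1)) (Sum.elim c₁ c₂) where
  injective := by
    refine Function.Injective.sumElim ?_ ?_ fun a b => by omega
    · exact fun a b h => h₁.injective (by omega)
    · exact fun a b h => h₂.injective (by omega)
  consistent := .sum (h₁.consistent.mono (fun a b h => by dsimp at h; omega) fun _ _ => id)
    (h₂.consistent.mono (fun a b h => by dsimp at h; omega) fun _ _ => id) hc
  consistent_reverse hp := .sum
    ((h₁.consistent_reverse hp).mono (fun a b h => by dsimp at h; omega) fun _ _ => id)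
    ((h₂.consistent_reverse hp).mono (fun a b h => by dsimp at h; omega) fun _ _ => id) hc
  adj_of_color_eq := by
    rintro (u | u) (v | v) huv hcuv <;> simp only [Sum.elim_inl, Sum.elim_inr, sum_adj] at hcuv ⊢
    · exact h₁.adj_of_color_eq u v (by rintro rfl; exact huv rfl) hcuv
    · exact hc u v hcuv
    · exact hc v u hcuv.symm
    · exact h₂.adj_of_color_eq u v (by rintro rfl; exact huv rfl) hcuv

end IsCompleteThinning

def HasCompleteThinning (proper : Bool) (G : SimpleGraph V) (k : ℕ) : Prop :=
  ∃ f c : V → ℕ, (∀ v, c v < k) ∧ IsCompleteThinning proper G f c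

noncomputable def completeThinness (proper : Bool) (G : SimpleGraph V) : ℕ :=
  sInf {k | HasCompleteThinning proper G k}

lemma compthin_eq_completeThinness (G : SimpleGraph V) :
    compthin G = completeThinness false G := by
  unfold compthin completeThinness HasCompleteThinning
  congr 1
  ext k
  simp only [Set.mem_ofPred_eq, IsCompleteThinning.false_iff]
  exact exists₂_congr fun _ _ => by tauto

lemma comppthin_eq_completeThinness (G : SimpleGraph V) :
    comppthin G = completeThinness true G := by
  unfold comppthin completeThinness HasCompleteThinning
  congr 1
  ext k
  simp only [Set.mem_ofPred_eq, IsCompleteThinning.true_iff]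
  exact exists₂_congr fun _ _ => by tauto

namespace HasCompleteThinning

variable {p : Bool}

lemma card [Fintype V] (G : SimpleGraph V) : HasCompleteThinning p G (Fintype.card V) := by
  let e := fun v => (Fintype.equivFin V v : ℕ)
  have he : Function.Injective e := Fin.val_injective.comp (Fintype.equivFin V).injective
  refine ⟨e, e, fun v => (Fintype.equivFin V v).isLt, he, ?_, fun _ => ?_, fun u v huv h => ?_⟩
  · exact fun _ _ _ hrs _ hc => absurd (he hc ▸ hrs) (lt_irrefl _)
  · exact fun _ _ _ hrs _ hc => absurd (he hc ▸ hrs) (lt_irrefl _)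
  · exact absurd (he h) huv

lemma of_isCompleteThinning [Fintype V] {G : SimpleGraph V} {f c : V → ℕ}
    (h : IsCompleteThinning p G f c) : HasCompleteThinning p G (Finset.univ.image c).card := by
  set e := (Finset.univ.image c).equivFin
  have hmem v : c v ∈ Finset.univ.image c := Finset.mem_image_of_mem c (Finset.mem_univ v)
  refine ⟨f, fun v => e ⟨c v, hmem v⟩, fun v => (e _).isLt, h.mono (fun _ _ => Iff.rfl) ?_⟩
  intro a b hab
  simpa using e.injective (Fin.ext hab)

lemma sum {G₁ : SimpleGraph V₁} {G₂ : SimpleGraph V₂} {k₁ k₂ : ℕ}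
    (h₁ : HasCompleteThinning p G₁ k₁) (h₂ : HasCompleteThinning p G₂ k₂) :
    HasCompleteThinning p (G₁ ⊕g G₂) (k₁ + k₂) := by
  obtain ⟨f₁, c₁, hk₁, hfc₁⟩ := h₁
  obtain ⟨f₂, c₂, hk₂, hfc₂⟩ := h₂
  have hfc₂' : IsCompleteThinning p G₂ f₂ (k₁ + c₂ ·) :=
    hfc₂.mono (fun _ _ => Iff.rfl) fun _ _ h => by omega
  refine ⟨_, _, ?_, hfc₁.sum hfc₂' fun a b => (hk₁ a).trans_le (Nat.le_add_right _ _) |>.ne⟩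
  rintro (v | v)
  · exact (hk₁ v).trans_le (Nat.le_add_right _ _)
  · exact Nat.add_lt_add_left (hk₂ v) k₁

lemma exists_add_le_of_sum [Fintype V₁] [Fintype V₂] {G₁ : SimpleGraph V₁}
    {G₂ : SimpleGraph V₂} {k : ℕ} (h : HasCompleteThinning p (G₁ ⊕g G₂) k) :
    ∃ k₁ k₂, HasCompleteThinning p G₁ k₁ ∧ HasCompleteThinning p G₂ k₂ ∧ k₁ + k₂ ≤ k := by
  obtain ⟨f, c, hk, hfc⟩ := h
  let ι₁ : G₁ ↪g G₁ ⊕g G₂ := Embedding.sumInl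
  let ι₂ : G₂ ↪g G₁ ⊕g G₂ := Embedding.sumInr
  refine ⟨_, _, of_isCompleteThinning (hfc.comap ι₁), of_isCompleteThinning (hfc.comap ι₂), ?_⟩
  have hdisj : Disjoint (Finset.univ.image (c ∘ ι₁)) (Finset.univ.image (c ∘ ι₂)) := by
    simp only [Finset.disjoint_left, Finset.mem_image, Finset.mem_univ, true_and]
    rintro _ ⟨a, rfl⟩ ⟨b, hb⟩
    exact not_adj_sum_inl_inr a b (hfc.adj_of_color_eq _ _ Sum.inl_ne_inr hb.symm)
  have hsub : Finset.univ.image (c ∘ ι₁) ∪ Finset.univ.image (c ∘ ι₂) ⊆ Finset.range k :=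
    Finset.union_subset (Finset.image_subset_iff.2 fun _ _ => Finset.mem_range.2 (hk _))
      (Finset.image_subset_iff.2 fun _ _ => Finset.mem_range.2 (hk _))
  simpa [Finset.card_union_of_disjoint hdisj] using Finset.card_le_card hsub

end HasCompleteThinning

lemma hasCompleteThinning_completeThinness {p : Bool} [Fintype V] (G : SimpleGraph V) :
    HasCompleteThinning p G (completeThinness p G) :=
  Nat.sInf_mem (s := {k | HasCompleteThinning p G k}) ⟨_, HasCompleteThinning.card G⟩

lemma completeThinness_sum (p : Bool) [Fintype V₁] [Fintype V₂] (G₁ : SimpleGraph V₁)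
    (G₂ : SimpleGraph V₂) :
    completeThinness p (G₁ ⊕g G₂) = completeThinness p G₁ + completeThinness p G₂ := by
  refine le_antisymm (Nat.sInf_le ((hasCompleteThinning_completeThinness G₁).sum
    (hasCompleteThinning_completeThinness G₂))) ?_
  obtain ⟨k₁, k₂, h₁, h₂, hle⟩ :=
    (hasCompleteThinning_completeThinness (G₁ ⊕g G₂)).exists_add_le_of_sum
  exact (add_le_add (Nat.sInf_le h₁) (Nat.sInf_le h₂)).trans hle

end CompleteThinning

/-- Complete (proper) thinness of a disjoint union is the sum of the complete (proper)
thinnesses. -/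
theorem compthin_sum {V₁ V₂ : Type*} [Fintype V₁] [Fintype V₂]
    (G₁ : SimpleGraph V₁) (G₂ : SimpleGraph V₂) :
    compthin (G₁ ⊕g G₂) = compthin G₁ + compthin G₂ ∧
    comppthin (G₁ ⊕g G₂) = comppthin G₁ + comppthin G₂ := by
  simp only [compthin_eq_completeThinness, comppthin_eq_completeThinness]
  exact ⟨completeThinness_sum false G₁ G₂, completeThinness_sum true G₁ G₂⟩
end

section
/- For any graphs G₁ and G₂ with G₂ having at least one edge, thin(G₁ × G₂) ≥ ω(G₁)/2, where × denotes the tensor (categorical) product. -/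
open SimpleGraph

/-- The tensor (categorical) product of two graphs. -/
def tensorProd {V₁ V₂ : Type*} (G₁ : SimpleGraph V₁) (G₂ : SimpleGraph V₂) :
    SimpleGraph (V₁ × V₂) where
  Adj x y := G₁.Adj x.1 y.1 ∧ G₂.Adj x.2 y.2
  symm := ⟨fun _ _ h => ⟨h.1.symm, h.2.symm⟩⟩
  loopless := ⟨fun _ h => G₁.loopless.irrefl _ h.1⟩

/-!
Fix an edge `ab` of `G₂` and a maximum clique `s` of `G₁`. The pairs `(i, a)`, `(i, b)` for
`i ∈ s` span a crown graph in `G₁ × G₂`: `(j, b)` is adjacent to `(i, a)` exactly when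
`i ≠ j`. In a consistent ordering and partition, the earlier endpoints of two such pairs
cannot share a class, since the later of them would be forced to be adjacent to its own
partner. Splitting `s` according to which of `(i, a)`, `(i, b)` comes first, each half
therefore has at most `thin (G₁ × G₂)` elements.
-/

section

variable {V : Type*}

theorem exists_consistent_lt_thin [Finite V] (G : SimpleGraph V) :
    ∃ f c : V → ℕ, Function.Injective f ∧ (∀ v, c v < thin G) ∧ Consistent G f c := by
  obtain ⟨n, ⟨e⟩⟩ := Finite.exists_equiv_fin V
  have he : Function.Injective fun v => (e v : ℕ) := Fin.val_injective.comp e.injective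
  refine Nat.sInf_mem (s := {k | ∃ f c : V → ℕ, Function.Injective f ∧ (∀ v, c v < k) ∧
    Consistent G f c}) ⟨n, _, _, he, fun v => (e v).isLt, ?_⟩
  intro r s _ hrs _ hc _
  exact absurd hrs (by rw [he hc]; exact lt_irrefl _)

theorem exists_isClique_card_omegaNum [Finite V] (G : SimpleGraph V) :
    ∃ s : Finset V, s.card = omegaNum G ∧ G.IsClique (s : Set V) := by
  have := Fintype.ofFinite V
  refine Nat.sSup_mem (s := {n | ∃ s : Finset V, s.card = n ∧ G.IsClique (s : Set V)})
    ⟨0, ∅, by simp⟩ ⟨Fintype.card V, ?_⟩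
  rintro _ ⟨s, rfl, -⟩
  exact s.card_le_univ

theorem Consistent.injOn_of_crown {G : SimpleGraph V} {f c : V → ℕ} (hcons : Consistent G f c)
    (hf : Function.Injective f) {ι : Type*} {t : Set ι} {x y : ι → V} (hx : Set.InjOn x t)
    (hxy : ∀ i ∈ t, f (x i) < f (y i)) (hadj : ∀ i ∈ t, ∀ j ∈ t, i ≠ j → G.Adj (y j) (x i))
    (hnadj : ∀ j ∈ t, ¬ G.Adj (y j) (x j)) : Set.InjOn (c ∘ x) t := by
  intro i hi j hj hcij
  by_contra hne
  rcases lt_or_gt_of_ne fun h => hne (hx hi hj (hf h)) with hlt | hlt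
  · exact hnadj j hj (hcons _ _ _ hlt (hxy j hj) hcij (hadj i hi j hj hne))
  · exact hnadj i hi (hcons _ _ _ hlt (hxy i hi) hcij.symm (hadj j hj i hi (Ne.symm hne)))

theorem Consistent.card_le_of_crown {G : SimpleGraph V} {f c : V → ℕ} {k : ℕ}
    (hcons : Consistent G f c) (hf : Function.Injective f) (hc : ∀ v, c v < k) {ι : Type*}
    {t : Finset ι} {x y : ι → V} (hx : Set.InjOn x t) (hxy : ∀ i ∈ t, f (x i) < f (y i))
    (hadj : ∀ i ∈ t, ∀ j ∈ t, i ≠ j → G.Adj (y j) (x i))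
    (hnadj : ∀ j ∈ t, ¬ G.Adj (y j) (x j)) : t.card ≤ k := by
  simpa using Finset.card_le_card_of_injOn (t := Finset.range k) (c ∘ x)
    (fun i _ => Finset.mem_range.2 (hc (x i))) (hcons.injOn_of_crown hf hx hxy hadj hnadj)

end

theorem card_le_of_consistent_tensorProd {V₁ V₂ : Type*} {G₁ : SimpleGraph V₁}
    {G₂ : SimpleGraph V₂} {a b : V₂} (hab : G₂.Adj a b) {f c : V₁ × V₂ → ℕ} {k : ℕ}
    (hcons : Consistent (tensorProd G₁ G₂) f c) (hf : Function.Injective f)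
    (hc : ∀ v, c v < k) {s : Finset V₁} (hs : G₁.IsClique (s : Set V₁))
    (hlt : ∀ i ∈ s, f (i, a) < f (i, b)) : s.card ≤ k :=
  hcons.card_le_of_crown hf hc (x := (·, a)) (y := (·, b))
    (fun _ _ _ _ h => congrArg Prod.fst h) hlt
    (fun _ hi _ hj hij => ⟨hs hj hi hij.symm, hab.symm⟩) fun _ _ h => h.1.ne rfl

/-- If `G₂` has at least one edge, then `thin (G₁ × G₂) ≥ ω(G₁)/2`. -/
theorem thin_tensorProd_ge {V₁ V₂ : Type*} [Fintype V₁] [Fintype V₂]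
    (G₁ : SimpleGraph V₁) (G₂ : SimpleGraph V₂) (h : ∃ a b : V₂, G₂.Adj a b) :
    omegaNum G₁ ≤ 2 * thin (tensorProd G₁ G₂) := by
  obtain ⟨a, b, hab⟩ := h
  obtain ⟨f, c, hf, hc, hcons⟩ := exists_consistent_lt_thin (tensorProd G₁ G₂)
  obtain ⟨s, hcard, hs⟩ := exists_isClique_card_omegaNum G₁
  have hsub (p : V₁ → Prop) [DecidablePred p] : G₁.IsClique (s.filter p : Set V₁) :=
    hs.subset (Finset.coe_subset.2 (s.filter_subset p))
  have hba (i : V₁) (hi : ¬ f (i, a) < f (i, b)) : f (i, b) < f (i, a) :=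
    (not_lt.1 hi).lt_of_ne fun h => hab.ne (congrArg Prod.snd (hf h)).symm
  rw [← hcard, ← s.card_filter_add_card_filter_not fun i => f (i, a) < f (i, b), two_mul]
  exact add_le_add
    (card_le_of_consistent_tensorProd hab hcons hf hc (hsub _)
      fun i hi => (Finset.mem_filter.1 hi).2)
    (card_le_of_consistent_tensorProd hab.symm hcons hf hc (hsub _)
      fun i hi => hba i (Finset.mem_filter.1 hi).2)
end
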